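/- arXiv:1509.02389 — 2 statements merged into one kernel-verified Lean document; each statement's English description precedes it below -/
import Mathlib

section
/- In the 1D i.i.d. checkerboard case where a(y,ω) = Σ_k 1_{[k,k+1)}(y) a_k(ω) with (a_k) i.i.d. taking values α and β each with probability 1/2, the antithetic estimator built from b_k = α + β - a_k satisfies: b(y,ω) has the same law as a(y,ω), and the antithetic approximation ã*_N = (a*_N + b*_N)/2, where a*_N = (N⁻¹Σ_{k=0}^{N-1} a_k⁻¹)⁻¹ and b*_N = (N⁻¹Σ_{k=0}^{N-1} b_k⁻¹)⁻¹, is an unbiased estimator of E[a*_N] with Var(ã*_N) ≤ Var(a*_N)/2. -/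
open MeasureTheory ProbabilityTheory

/-!
Each `a_k` lies in `{α, β}`, so `(α + β - a_k)⁻¹ = α⁻¹ + β⁻¹ - a_k⁻¹`, and averaging gives
`(b*_N)⁻¹ = α⁻¹ + β⁻¹ - (a*_N)⁻¹`: the antithetic estimate is an antitone function of `a*_N`.
Chebyshev's association inequality `cov(X, g X) ≤ 0` for antitone `g` then gives
`Var((X + Y)/2) = (Var X + 2 cov(X, Y) + Var Y)/4 ≤ Var X / 2`, because `Y = b*_N` has the
same law as `X = a*_N`. The latter holds since the reflection `x ↦ α + β - x` preserves the
two-point law and the joint law of independent cells is the product of the marginals.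
-/

open Set

noncomputable def harmonicMean {N : ℕ} (v : Fin N → ℝ) : ℝ :=
  ((N : ℝ)⁻¹ * ∑ k, (v k)⁻¹)⁻¹

lemma harmonicMean_eq_range (N : ℕ) (x : ℕ → ℝ) :
    harmonicMean (fun k : Fin N => x k) = ((N : ℝ)⁻¹ * ∑ k ∈ Finset.range N, (x k)⁻¹)⁻¹ := by
  rw [harmonicMean, Fin.sum_univ_eq_sum_range (fun k => (x k)⁻¹)]

lemma measurable_harmonicMean (N : ℕ) : Measurable (harmonicMean : (Fin N → ℝ) → ℝ) := by
  unfold harmonicMean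
  fun_prop

lemma harmonicMean_mem_Icc {N : ℕ} {v : Fin N → ℝ} {m M : ℝ} (hN : 0 < N) (hm : 0 < m)
    (hv : ∀ k, v k ∈ Icc m M) : harmonicMean v ∈ Icc m M := by
  have hM : 0 < M := hm.trans_le ((hv ⟨0, hN⟩).1.trans (hv ⟨0, hN⟩).2)
  have hmean : (N : ℝ)⁻¹ * ∑ k, (v k)⁻¹ ∈ Icc M⁻¹ m⁻¹ := by
    have := (convex_Icc M⁻¹ m⁻¹).sum_mem (t := Finset.univ) (w := fun _ => (N : ℝ)⁻¹)
      (z := fun k => (v k)⁻¹) (fun _ _ => by positivity) (by simp [hN.ne'])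
      fun k _ => ⟨inv_anti₀ (hm.trans_le (hv k).1) (hv k).2, inv_anti₀ hm (hv k).1⟩
    simpa [Finset.mul_sum] using this
  obtain ⟨hlo, hhi⟩ := hmean
  have ht : 0 < (N : ℝ)⁻¹ * ∑ k, (v k)⁻¹ := (inv_pos.2 hM).trans_le hlo
  unfold harmonicMean
  exact ⟨by simpa using inv_anti₀ ht hhi, by simpa using inv_anti₀ (inv_pos.2 hM) hlo⟩

lemma inv_add_sub_of_eq_or_eq {α β x : ℝ} (hx : x = α ∨ x = β) :
    (α + β - x)⁻¹ = α⁻¹ + β⁻¹ - x⁻¹ := by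
  rcases hx with rfl | rfl <;> simp

lemma harmonicMean_add_sub {N : ℕ} (hN : N ≠ 0) {α β : ℝ} {v : Fin N → ℝ}
    (hv : ∀ k, v k = α ∨ v k = β) :
    harmonicMean (fun k => α + β - v k) = (α⁻¹ + β⁻¹ - (harmonicMean v)⁻¹)⁻¹ := by
  simp only [harmonicMean, inv_inv, inv_add_sub_of_eq_or_eq (hv _), Finset.sum_sub_distrib,
    Finset.sum_const, Finset.card_univ, Fintype.card_fin, nsmul_eq_mul, mul_sub,
    inv_mul_cancel_left₀ ((Nat.cast_ne_zero (R := ℝ)).2 hN)]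

lemma antitoneOn_inv_sub_inv {α β : ℝ} (hα : 0 < α) (hβ : 0 < β) :
    AntitoneOn (fun x => (α⁻¹ + β⁻¹ - x⁻¹)⁻¹) (Ici (min α β)) := by
  have hmin : (min α β)⁻¹ < α⁻¹ + β⁻¹ := by
    rcases min_choice α β with h | h <;> rw [h] <;> linarith [inv_pos.2 hα, inv_pos.2 hβ]
  intro x hx y _ hxy
  have hx0 : 0 < x := (lt_min hα hβ).trans_le hx
  have hxpos : 0 < α⁻¹ + β⁻¹ - x⁻¹ := by linarith [inv_anti₀ (lt_min hα hβ) (mem_Ici.1 hx)]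
  exact inv_anti₀ hxpos (by linarith [inv_anti₀ hx0 hxy])

section Covariance

variable {Ω : Type*} [MeasurableSpace Ω] {μ : Measure Ω} {X Y : Ω → ℝ}

lemma covariance_eq_integral_mul_sub [IsProbabilityMeasure μ] (hX : MemLp X 2 μ)
    (hY : MemLp Y 2 μ) (c : ℝ) : cov[X, Y; μ] = ∫ ω, (X ω - μ[X]) * (Y ω - c) ∂μ := by
  have hXc : MemLp (fun ω => X ω - μ[X]) 2 μ := hX.sub (memLp_const _)
  have hcentered : Integrable (fun ω => (X ω - μ[X]) * (Y ω - μ[Y])) μ :=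
    hXc.integrable_mul (hY.sub (memLp_const _))
  have hlin : Integrable (fun ω => (X ω - μ[X]) * (μ[Y] - c)) μ :=
    (hXc.integrable one_le_two).mul_const _
  have hsplit : (fun ω => (X ω - μ[X]) * (Y ω - c)) =
      fun ω => (X ω - μ[X]) * (Y ω - μ[Y]) + (X ω - μ[X]) * (μ[Y] - c) := by
    funext ω; ring
  rw [hsplit, integral_add hcentered hlin, integral_mul_const,
    integral_sub (hX.integrable one_le_two) (integrable_const _)]
  simp [covariance]

lemma covariance_nonpos_of_antitoneOn [IsProbabilityMeasure μ] {g : ℝ → ℝ} {s : Set ℝ}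
    (hs : Convex ℝ s) (hsc : IsClosed s) (hg : AntitoneOn g s) (hXs : ∀ᵐ ω ∂μ, X ω ∈ s)
    (hYg : ∀ᵐ ω ∂μ, Y ω = g (X ω)) (hX : MemLp X 2 μ) (hY : MemLp Y 2 μ) :
    cov[X, Y; μ] ≤ 0 := by
  have hm : μ[X] ∈ s := hs.integral_mem hsc hXs (hX.integrable one_le_two)
  rw [covariance_eq_integral_mul_sub hX hY (g μ[X])]
  refine integral_nonpos_of_ae ?_
  filter_upwards [hXs, hYg] with ω hω hYω
  rw [hYω]
  rcases le_total (X ω) μ[X] with h | h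
  · exact mul_nonpos_of_nonpos_of_nonneg (sub_nonpos.2 h) (sub_nonneg.2 (hg hω hm h))
  · exact mul_nonpos_of_nonneg_of_nonpos (sub_nonneg.2 h) (sub_nonpos.2 (hg hm hω h))

lemma variance_add_div_two_le [IsFiniteMeasure μ] (hX : MemLp X 2 μ) (hY : MemLp Y 2 μ)
    (hvar : Var[Y; μ] = Var[X; μ]) (hcov : cov[X, Y; μ] ≤ 0) :
    Var[fun ω => (X ω + Y ω) / 2; μ] ≤ Var[X; μ] / 2 := by
  simp_rw [div_eq_mul_inv]
  rw [variance_mul_const, variance_fun_add hX hY, hvar]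
  nlinarith

end Covariance

section Law

variable {Ω : Type*} [MeasurableSpace Ω] {μ : Measure Ω}

lemma map_add_sub_twoPoint (α β : ℝ) (c : ENNReal) :
    (c • Measure.dirac α + c • Measure.dirac β).map (fun x => α + β - x) =
      c • Measure.dirac α + c • Measure.dirac β := by
  have hT : Measurable (fun x : ℝ => α + β - x) := by fun_prop
  rw [Measure.map_add _ _ hT, Measure.map_smul, Measure.map_smul, Measure.map_dirac' hT,
    Measure.map_dirac' hT, add_sub_cancel_left, add_sub_cancel_right, add_comm]

lemma ae_eq_or_eq_of_map_eq_twoPoint {X : Ω → ℝ} (hX : AEMeasurable X μ) {α β : ℝ}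
    {c d : ENNReal} (h : μ.map X = c • Measure.dirac α + d • Measure.dirac β) :
    ∀ᵐ ω ∂μ, X ω = α ∨ X ω = β := by
  refine ae_of_ae_map (p := fun x => x = α ∨ x = β) hX ?_
  rw [h, ae_add_measure_iff]
  exact ⟨Measure.ae_smul_measure (by simp [ae_dirac_eq]) _,
    Measure.ae_smul_measure (by simp [ae_dirac_eq]) _⟩

lemma map_fun_comp_eq_of_iIndepFun [IsProbabilityMeasure μ] {ι E : Type*} [Fintype ι]
    [MeasurableSpace E] {X : ι → Ω → E} (hX : ∀ i, Measurable (X i)) (hind : iIndepFun X μ)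
    {T : E → E} (hT : Measurable T) (hinv : ∀ i, (μ.map (X i)).map T = μ.map (X i)) :
    μ.map (fun ω i => T (X i ω)) = μ.map (fun ω i => X i ω) := by
  have hmap := hind.map_fun_eq_pi_map fun i => (hX i).aemeasurable
  have := fun i => Measure.isProbabilityMeasure_map (μ := μ) (hX i).aemeasurable
  rw [show (fun ω i => T (X i ω)) = (fun v i => T (v i)) ∘ (fun ω i => X i ω) from rfl,
    ← Measure.map_map (by fun_prop) (measurable_pi_lambda _ hX),
    hmap, Measure.pi_map_pi fun _ => hT.aemeasurable]
  simp only [hinv]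

end Law

/-- 1D i.i.d. Bernoulli case: with `b_k = α + β - a_k`, the antithetic field has the
same law as the original one, and the antithetic estimator
`ã*_N = (a*_N + b*_N)/2` (harmonic means of the cell values) is unbiased with at
most half the variance. -/
theorem oneD_antithetic_bernoulli {Ω : Type*} [MeasurableSpace Ω]
    (μ : Measure Ω) [IsProbabilityMeasure μ]
    (α β : ℝ) (hα : 0 < α) (hβ : 0 < β)
    (a : ℕ → Ω → ℝ) (ha_meas : ∀ k, Measurable (a k))
    (ha_indep : iIndepFun a μ)
    (ha_law : ∀ k, Measure.map (a k) μ =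
      (1/2 : ENNReal) • Measure.dirac α + (1/2 : ENNReal) • Measure.dirac β)
    (N : ℕ) (hN : 0 < N) :
    (Measure.map (fun ω => fun k : Fin N => α + β - a k ω) μ
        = Measure.map (fun ω => fun k : Fin N => a k ω) μ) ∧
    (∫ ω, (((((N:ℝ))⁻¹ * ∑ k ∈ Finset.range N, (a k ω)⁻¹)⁻¹
          + (((N:ℝ))⁻¹ * ∑ k ∈ Finset.range N, (α + β - a k ω)⁻¹)⁻¹) / 2) ∂μ
        = ∫ ω, (((N:ℝ))⁻¹ * ∑ k ∈ Finset.range N, (a k ω)⁻¹)⁻¹ ∂μ) ∧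
    variance (fun ω => (((((N:ℝ))⁻¹ * ∑ k ∈ Finset.range N, (a k ω)⁻¹)⁻¹
          + (((N:ℝ))⁻¹ * ∑ k ∈ Finset.range N, (α + β - a k ω)⁻¹)⁻¹) / 2)) μ
      ≤ variance (fun ω => (((N:ℝ))⁻¹ * ∑ k ∈ Finset.range N, (a k ω)⁻¹)⁻¹) μ / 2 := by
  set A : Ω → Fin N → ℝ := fun ω k => a k ω
  set B : Ω → Fin N → ℝ := fun ω k => α + β - a k ω
  have hlaw : μ.map B = μ.map A :=
    map_fun_comp_eq_of_iIndepFun (X := fun k : Fin N => a k) (fun k => ha_meas k)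
      (ha_indep.precomp (g := fun k : Fin N => (k : ℕ)) Fin.val_injective) (by fun_prop)
      fun k => by rw [ha_law, map_add_sub_twoPoint]
  have hvals : ∀ᵐ ω ∂μ, ∀ k : Fin N, a k ω = α ∨ a k ω = β :=
    ae_all_iff.2 fun k => ae_eq_or_eq_of_map_eq_twoPoint (ha_meas k).aemeasurable (ha_law k)
  set X := fun ω => harmonicMean (A ω)
  set Y := fun ω => harmonicMean (B ω)
  have hXY : IdentDistrib Y X μ μ :=
    (IdentDistrib.mk (by fun_prop) (by fun_prop) hlaw).comp (measurable_harmonicMean N)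
  have hXs : ∀ᵐ ω ∂μ, X ω ∈ Icc (min α β) (max α β) := by
    filter_upwards [hvals] with ω hω
    refine harmonicMean_mem_Icc hN (lt_min hα hβ) fun k => ?_
    rcases hω k with h | h <;> simp [A, h]
  have hYg : ∀ᵐ ω ∂μ, Y ω = (α⁻¹ + β⁻¹ - (X ω)⁻¹)⁻¹ :=
    hvals.mono fun ω hω => harmonicMean_add_sub hN.ne' hω
  have hX : MemLp X 2 μ :=
    .of_bound ((measurable_harmonicMean N).comp (by fun_prop)).aestronglyMeasurable _
      (hXs.mono fun _ hω => abs_le_max_abs_abs hω.1 hω.2)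
  have hY : MemLp Y 2 μ := hXY.memLp_iff.2 hX
  have hcov : cov[X, Y; μ] ≤ 0 :=
    covariance_nonpos_of_antitoneOn (convex_Icc _ _) isClosed_Icc
      ((antitoneOn_inv_sub_inv hα hβ).mono Icc_subset_Ici_self) hXs hYg hX hY
  have eX : ∀ ω, ((N : ℝ)⁻¹ * ∑ k ∈ Finset.range N, (a k ω)⁻¹)⁻¹ = X ω :=
    fun ω => (harmonicMean_eq_range N fun k => a k ω).symm
  have eY : ∀ ω, ((N : ℝ)⁻¹ * ∑ k ∈ Finset.range N, (α + β - a k ω)⁻¹)⁻¹ = Y ω :=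
    fun ω => (harmonicMean_eq_range N fun k => α + β - a k ω).symm
  simp only [eX, eY]
  refine ⟨hlaw, ?_, variance_add_div_two_le hX hY hXY.variance_eq hcov⟩
  rw [integral_div, integral_add (hX.integrable one_le_two) (hY.integrable one_le_two),
    hXY.integral_eq]
  ring
end

section
/- First-order expansion of the inverse of a perturbed harmonic mean (1D perturbative homogenization): for fixed positive reals a, c with a + c > 0 and Bernoulli(η) i.i.d. variables (B_k)_{k=0}^{N-1}, the expected 1D homogenized coefficient E[a*_N(η)] with a*_N(η) = (N⁻¹Σ_k (a + B_k c)⁻¹)⁻¹ satisfies E[a*_N(η)] = a + η·N·(h_N(1) - a) + O(η²) as η → 0, where h_N(1) = (N⁻¹((N-1)a⁻¹ + (a+c)⁻¹))⁻¹ is the coefficient with exactly one perturbed cell. -/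
/-!
The expectation is a polynomial in `η`: a configuration with `m` defects has weight
`η ^ m * (1 - η) ^ (N - m)`, so configurations with at least two defects contribute `O(η²)`.
Expanding `(1 - η) ^ N = 1 - N η + O(η²)` and `η (1 - η) ^ (N - 1) = η + O(η²)` leaves
`a + η Σₖ (h_N(1) - a)`, since every one-defect configuration has coefficient `h_N(1)`.
-/

open Filter Asymptotics Finset Topology

section

variable {ι : Type*}

def noDefect : ι → Bool := fun _ => false

def singleDefect [DecidableEq ι] (k : ι) : ι → Bool := fun j => decide (j = k)

def bernoulliWeight [Fintype ι] (η : ℝ) (s : ι → Bool) : ℝ := ∏ k, if s k then η else 1 - η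

lemma singleDefect_injective [DecidableEq ι] :
    Function.Injective (singleDefect : ι → ι → Bool) :=
  fun k l h => by simpa [singleDefect, eq_comm] using congrFun h l

lemma singleDefect_ne_noDefect [DecidableEq ι] (k : ι) : singleDefect k ≠ noDefect :=
  fun h => by simpa [singleDefect, noDefect] using congrFun h k

lemma bernoulliWeight_eq [Fintype ι] (η : ℝ) (s : ι → Bool) :
    bernoulliWeight η s = η ^ #{k | s k} * (1 - η) ^ (Fintype.card ι - #{k | s k}) := by
  rw [bernoulliWeight, prod_ite, prod_const, prod_const, ← card_univ,
    ← card_filter_add_card_filter_not (s := univ) (fun k => s k = true), Nat.add_sub_cancel_left]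

lemma bernoulliWeight_noDefect [Fintype ι] (η : ℝ) :
    bernoulliWeight η (noDefect : ι → Bool) = (1 - η) ^ Fintype.card ι := by
  simp [bernoulliWeight_eq, noDefect]

lemma bernoulliWeight_singleDefect [Fintype ι] [DecidableEq ι] (η : ℝ) (k : ι) :
    bernoulliWeight η (singleDefect k) = η * (1 - η) ^ (Fintype.card ι - 1) := by
  simp [bernoulliWeight_eq, singleDefect, filter_eq']

lemma two_le_card_defects [Fintype ι] [DecidableEq ι] {s : ι → Bool}
    (hs : s ∉ insert noDefect (univ.image singleDefect)) : 2 ≤ #{k | s k} := by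
  by_contra! h
  interval_cases hm : #{k | s k}
  · refine hs (mem_insert.mpr (Or.inl (funext fun k => ?_)))
    simpa [noDefect] using filter_eq_empty_iff.mp (card_eq_zero.mp hm) (mem_univ k)
  · obtain ⟨k, hk⟩ := card_eq_one.mp hm
    refine hs (mem_insert_of_mem (mem_image.mpr ⟨k, mem_univ k, funext fun j => ?_⟩))
    have hj := Finset.ext_iff.mp hk j
    simp only [mem_filter, mem_univ, true_and, mem_singleton] at hj
    rw [singleDefect, Bool.eq_iff_iff, decide_eq_true_iff, hj]

end

lemma one_sub_pow_sub_isBigO (n : ℕ) :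
    (fun η : ℝ => (1 - η) ^ n - (1 - n * η)) =O[𝓝 0] fun η => η ^ 2 := by
  induction n with
  | zero => simpa using isBigO_zero (fun η : ℝ => η ^ 2) (𝓝 0)
  | succ n ih =>
    have hbdd : (fun η : ℝ => 1 - η) =O[𝓝 0] fun _ => (1 : ℝ) :=
      (tendsto_const_nhds.sub tendsto_id).isBigO_one ℝ
    have hrec : ∀ η : ℝ, (1 - η) ^ (n + 1) - (1 - (n + 1 : ℕ) * η)
        = (1 - η) * ((1 - η) ^ n - (1 - n * η)) + n * η ^ 2 := by
      intro η; push_cast; ring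
    simp only [hrec]
    simpa using (hbdd.mul ih).add ((isBigO_refl _ _).const_mul_left (n : ℝ))

lemma mul_one_sub_pow_sub_isBigO (n : ℕ) :
    (fun η : ℝ => η * (1 - η) ^ n - η) =O[𝓝 0] fun η => η ^ 2 := by
  have hη : (fun η : ℝ => η) =O[𝓝 0] fun _ => (1 : ℝ) := tendsto_id.isBigO_one ℝ
  have hsplit : ∀ η : ℝ, η * (1 - η) ^ n - η = η * ((1 - η) ^ n - (1 - n * η)) - n * η ^ 2 := by
    intro η; ring
  simp only [hsplit]
  simpa using (hη.mul (one_sub_pow_sub_isBigO n)).sub ((isBigO_refl _ _).const_mul_left (n : ℝ))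

lemma pow_mul_one_sub_pow_isBigO {m : ℕ} (hm : 2 ≤ m) (n : ℕ) :
    (fun η : ℝ => η ^ m * (1 - η) ^ n) =O[𝓝 0] fun η => η ^ 2 := by
  obtain ⟨m, rfl⟩ := Nat.exists_eq_add_of_le hm
  have hrest : (fun η : ℝ => η ^ m * (1 - η) ^ n) =O[𝓝 0] fun _ => (1 : ℝ) :=
    ((continuous_pow m).mul ((continuous_const.sub continuous_id).pow n)).tendsto 0 |>.isBigO_one ℝ
  simpa [pow_add, mul_assoc] using (isBigO_refl (fun η : ℝ => η ^ 2) (𝓝 0)).mul hrest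

lemma Asymptotics.IsBigO.smul_const {α E : Type*} [NormedAddCommGroup E] [NormedSpace ℝ E]
    {l : Filter α} {f g : α → ℝ} (h : f =O[l] g) (x : E) : (fun a => f a • x) =O[l] g := by
  simpa using h.smul (isBigO_const_one ℝ x l)

theorem sum_bernoulliWeight_smul_sub_isBigO {ι E : Type*} [Fintype ι] [DecidableEq ι]
    [NormedAddCommGroup E] [NormedSpace ℝ E] (v : (ι → Bool) → E) :
    (fun η : ℝ => ∑ s, bernoulliWeight η s • v s
      - (v noDefect + η • ∑ k, (v (singleDefect k) - v noDefect))) =O[𝓝 0] fun η => η ^ 2 := by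
  set N := Fintype.card ι
  set A := insert noDefect (univ.image (singleDefect : ι → ι → Bool))
  have hnotMem : noDefect ∉ univ.image (singleDefect : ι → ι → Bool) := by
    simpa using fun k => singleDefect_ne_noDefect k
  have hsplit : ∀ η : ℝ, ∑ s, bernoulliWeight η s • v s
      - (v noDefect + η • ∑ k, (v (singleDefect k) - v noDefect))
      = ((1 - η) ^ N - (1 - N * η)) • v noDefect
        + (η * (1 - η) ^ (N - 1) - η) • ∑ k, v (singleDefect k)
        + ∑ s ∈ univ \ A, bernoulliWeight η s • v s := by
    intro η
    rw [← sum_sdiff (subset_univ A), sum_insert hnotMem,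
      sum_image fun k _ l _ h => singleDefect_injective h, bernoulliWeight_noDefect]
    simp only [bernoulliWeight_singleDefect, ← smul_sum, sum_sub_distrib, sum_const, card_univ,
      ← Nat.cast_smul_eq_nsmul ℝ]
    module
  simp only [hsplit]
  refine (((one_sub_pow_sub_isBigO N).smul_const _).add
    ((mul_one_sub_pow_sub_isBigO (N - 1)).smul_const _)).add (IsBigO.fun_sum fun s hs => ?_)
  simp only [bernoulliWeight_eq]
  exact (pow_mul_one_sub_pow_isBigO (two_le_card_defects (mem_sdiff.mp hs).2) _).smul_const _

theorem perturbative_expansion_one_defect_general (N : ℕ) (hN : 0 < N)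
    (a c : ℝ) :
    (fun η : ℝ =>
        (∑ s : Fin N → Bool,
          (∏ k, if s k then η else 1 - η) *
            (((N:ℝ))⁻¹ * ∑ k, (a + if s k then c else 0)⁻¹)⁻¹)
        - (a + η * N *
            ((((N:ℝ))⁻¹ * (((N:ℝ) - 1) * a⁻¹ + (a + c)⁻¹))⁻¹ - a)))
      =O[nhds 0] fun η : ℝ => η ^ 2 := by
  set v : (Fin N → Bool) → ℝ := fun s => ((N : ℝ)⁻¹ * ∑ k, (a + if s k then c else 0)⁻¹)⁻¹
  have hv₀ : v noDefect = a := by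
    have hN' : (N : ℝ) ≠ 0 := by exact_mod_cast hN.ne'
    simp [v, noDefect, hN']
  have hv₁ (k : Fin N) :
      v (singleDefect k) = ((N : ℝ)⁻¹ * (((N : ℝ) - 1) * a⁻¹ + (a + c)⁻¹))⁻¹ := by
    have hterm (j : Fin N) : (a + if singleDefect k j then c else 0)⁻¹
        = a⁻¹ + if k = j then (a + c)⁻¹ - a⁻¹ else 0 := by
      by_cases hj : k = j <;> simp [singleDefect, hj, eq_comm]
    simp only [v, hterm, sum_add_distrib, sum_ite_eq, mem_univ, if_true, sum_const, card_univ,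
      Fintype.card_fin, nsmul_eq_mul]
    ring
  refine (sum_bernoulliWeight_smul_sub_isBigO v).congr_left fun η => ?_
  simp only [bernoulliWeight, smul_eq_mul, hv₀, hv₁, sum_sub_distrib, sum_const, card_univ,
    Fintype.card_fin, nsmul_eq_mul]
  ring

/-- First-order defect expansion of the expected 1D homogenized coefficient:
`E[a*_N(η)] = a + η N (h_N(1) - a) + O(η²)` as `η → 0`, where the expectation over
the i.i.d. Bernoulli(η) defects is written out as a sum over configurations and
`h_N(1)` is the coefficient of the configuration with exactly one perturbed cell. -/
theorem perturbative_expansion_one_defect (N : ℕ) (hN : 0 < N)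
    (a c : ℝ) (ha : 0 < a) (hc : 0 < c) :
    (fun η : ℝ =>
        (∑ s : Fin N → Bool,
          (∏ k, if s k then η else 1 - η) *
            (((N:ℝ))⁻¹ * ∑ k, (a + if s k then c else 0)⁻¹)⁻¹)
        - (a + η * N *
            ((((N:ℝ))⁻¹ * (((N:ℝ) - 1) * a⁻¹ + (a + c)⁻¹))⁻¹ - a)))
      =O[nhds 0] fun η : ℝ => η ^ 2 :=
  perturbative_expansion_one_defect_general N hN a c
end
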